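/- arXiv:0907.2935 — 6 statements merged into one kernel-verified Lean document; each statement's English description precedes it below -/
import Mathlib

section
/- Let (V, →) be a directed graph whose balls are all finite, and suppose (V, →) is biconnected (every two vertices are mutually upstream of each other). If the connectivity dimension exists at some vertex v (i.e. the liminf and limsup of log|B(v,r)|/log r agree), then the connectivity dimension exists at every vertex and has the same value; i.e. the digraph is dimensionally homogeneous. -/
open Filter Topology

/-- The ball of radius `r` around `v` in the digraph `E`. -/
def gBall {V : Type*} (E : V → V → Prop) (v : V) : ℕ → Set V
  | 0 => {v}
  | r + 1 => gBall E v r ∪ {u | ∃ w ∈ gBall E v r, E u w}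

/-- Lower connectivity dimension at `v`. -/
noncomputable def dimLower {V : Type*} (E : V → V → Prop) (v : V) : EReal :=
  Filter.liminf
    (fun r : ℕ => ((Real.log ((gBall E v r).ncard) / Real.log r : ℝ) : EReal)) Filter.atTop

/-- Upper connectivity dimension at `v`. -/
noncomputable def dimUpper {V : Type*} (E : V → V → Prop) (v : V) : EReal :=
  Filter.limsup
    (fun r : ℕ => ((Real.log ((gBall E v r).ncard) / Real.log r : ℝ) : EReal)) Filter.atTop

/-!
If `w` reaches `v` in `d` steps then `B(w, r) ⊆ B(v, r + d)`, hence
`log |B(w,r)| / log r ≤ (log |B(v,r+d)| / log (r+d)) · (log (r+d) / log r)`.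
The last factor tends to `1`, and shifting the index by `d` changes neither the liminf nor the
limsup, so both dimensions at `w` are at most those at `v`. In a biconnected digraph the roles of
`v` and `w` can be swapped.
-/

namespace EReal

variable {α : Type*} {f : Filter α} [f.NeBot] {u v c : α → EReal}

lemma limsup_le_of_le_mul_of_tendsto_one (huv : ∀ᶠ x in f, u x ≤ v x * c x)
    (hv : 0 ≤ᶠ[f] v) (hc : Tendsto c f (𝓝 1)) : limsup u f ≤ limsup v f := by
  have hc₀ : 0 ≤ᶠ[f] c := (hc.eventually (lt_mem_nhds zero_lt_one)).mono fun _ h => h.le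
  calc limsup u f ≤ limsup (v * c) f := limsup_le_limsup huv
    _ ≤ limsup v f * limsup c f :=
        limsup_mul_le hv.frequently hc₀ (.inr (hc.limsup_eq ▸ EReal.coe_ne_top 1))
          (.inr (by simp [hc.limsup_eq]))
    _ = limsup v f := by rw [hc.limsup_eq, mul_one]

lemma liminf_le_of_le_mul_of_tendsto_one (huv : ∀ᶠ x in f, u x ≤ v x * c x)
    (hv : 0 ≤ᶠ[f] v) (hc : Tendsto c f (𝓝 1)) : liminf u f ≤ liminf v f := by
  have hc₀ : 0 ≤ᶠ[f] c := (hc.eventually (lt_mem_nhds zero_lt_one)).mono fun _ h => h.le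
  calc liminf u f ≤ liminf (c * v) f :=
        liminf_le_liminf (huv.mono fun _ h => h.trans_eq (mul_comm _ _))
    _ ≤ limsup c f * liminf v f :=
        liminf_mul_le hc₀ hv (.inl (by simp [hc.limsup_eq]))
          (.inl (hc.limsup_eq ▸ EReal.coe_ne_top 1))
    _ = liminf v f := by rw [hc.limsup_eq, one_mul]

end EReal

lemma tendsto_log_add_div_log (d : ℕ) :
    Tendsto (fun r : ℕ => Real.log (r + d : ℕ) / Real.log r) atTop (𝓝 1) := by
  have hlog : Tendsto (fun r : ℕ => Real.log r) atTop atTop :=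
    Real.tendsto_log_atTop.comp tendsto_natCast_atTop_atTop
  have hupper : Tendsto (fun r : ℕ => 1 + Real.log (1 + d) / Real.log r) atTop (𝓝 1) := by
    simpa using (hlog.const_div_atTop (Real.log (1 + d))).const_add 1
  refine tendsto_of_tendsto_of_tendsto_of_le_of_le' tendsto_const_nhds hupper ?_ ?_
  all_goals
    filter_upwards [eventually_ge_atTop 2] with r hr
    have hr₁ : (1 : ℝ) ≤ r := by exact_mod_cast one_le_two.trans hr
    have hlog_pos : 0 < Real.log r := Real.log_pos (by exact_mod_cast hr)
  · rw [le_div_iff₀ hlog_pos, one_mul]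
    exact Real.log_le_log (by positivity) (by push_cast; linarith)
  · rw [div_le_iff₀ hlog_pos, add_mul, div_mul_cancel₀ _ hlog_pos.ne', one_mul,
      ← Real.log_mul (by positivity) (by positivity)]
    exact Real.log_le_log (by positivity) (by push_cast; nlinarith)

lemma log_div_log_le_log_div_log_mul {m n r s : ℕ} (hm : 0 < m) (hmn : m ≤ n) (hrs : r ≤ s) :
    Real.log m / Real.log r ≤ Real.log n / Real.log s * (Real.log s / Real.log r) := by
  rcases Nat.lt_or_ge r 2 with hr | hr
  · -- `log 0 = log 1 = 0`, so both sides are junk divisions by zero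
    interval_cases r <;> simp
  have hlog_r : 0 < Real.log r := Real.log_pos (by exact_mod_cast hr)
  have hlog_s : 0 < Real.log s := Real.log_pos (by exact_mod_cast (by omega : 1 < s))
  rw [div_mul_div_cancel₀ hlog_s.ne']
  gcongr

section

variable {V : Type*} {E : V → V → Prop} {v w : V} {d : ℕ}

lemma gBall_mono (E : V → V → Prop) (v : V) : Monotone (gBall E v) :=
  monotone_nat_of_le_succ fun _ => Set.subset_union_left

lemma self_mem_gBall (E : V → V → Prop) (v : V) (r : ℕ) : v ∈ gBall E v r :=
  gBall_mono E v r.zero_le rfl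

lemma exists_mem_gBall_of_reflTransGen (h : Relation.ReflTransGen E w v) :
    ∃ d, w ∈ gBall E v d := by
  induction h using Relation.ReflTransGen.head_induction_on with
  | refl => exact ⟨0, rfl⟩
  | head hE _ ih =>
    obtain ⟨d, hd⟩ := ih
    exact ⟨d + 1, .inr ⟨_, hd, hE⟩⟩

lemma gBall_subset_gBall_add (hd : w ∈ gBall E v d) (r : ℕ) :
    gBall E w r ⊆ gBall E v (r + d) := by
  induction r with
  | zero =>
    rintro x rfl
    simpa using hd
  | succ r ih =>
    rintro x (hx | ⟨y, hy, hxy⟩)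
    · exact gBall_mono E v (by omega) (ih hx)
    · rw [Nat.add_right_comm]
      exact .inr ⟨y, ih hy, hxy⟩

lemma log_ncard_div_log_le_mul (hfin : ∀ r, (gBall E v r).Finite) (hd : w ∈ gBall E v d)
    (r : ℕ) :
    Real.log (gBall E w r).ncard / Real.log r ≤
      Real.log (gBall E v (r + d)).ncard / Real.log (r + d : ℕ) *
        (Real.log (r + d : ℕ) / Real.log r) :=
  log_div_log_le_log_div_log_mul
    ((Set.ncard_pos ((hfin _).subset (gBall_subset_gBall_add hd r))).2
      ⟨w, self_mem_gBall E w r⟩)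
    (Set.ncard_le_ncard (gBall_subset_gBall_add hd r) (hfin _)) (r.le_add_right d)

lemma dimUpper_le_of_mem_gBall (hfin : ∀ r, (gBall E v r).Finite) (hd : w ∈ gBall E v d) :
    dimUpper E w ≤ dimUpper E v := by
  refine (EReal.limsup_le_of_le_mul_of_tendsto_one (.of_forall fun r => ?_)
    (.of_forall fun r => ?_) (EReal.tendsto_coe.2 (tendsto_log_add_div_log d))).trans_eq
    (limsup_nat_add _ d)
  · exact_mod_cast log_ncard_div_log_le_mul hfin hd r
  · exact EReal.coe_nonneg.2 <|
      div_nonneg (Real.log_natCast_nonneg _) (Real.log_natCast_nonneg _)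

lemma dimLower_le_of_mem_gBall (hfin : ∀ r, (gBall E v r).Finite) (hd : w ∈ gBall E v d) :
    dimLower E w ≤ dimLower E v := by
  refine (EReal.liminf_le_of_le_mul_of_tendsto_one (.of_forall fun r => ?_)
    (.of_forall fun r => ?_) (EReal.tendsto_coe.2 (tendsto_log_add_div_log d))).trans_eq
    (liminf_nat_add _ d)
  · exact_mod_cast log_ncard_div_log_le_mul hfin hd r
  · exact EReal.coe_nonneg.2 <|
      div_nonneg (Real.log_natCast_nonneg _) (Real.log_natCast_nonneg _)

end

/-- In a biconnected digraph with finite balls, if the connectivity dimension exists at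
one vertex then it exists at every vertex, with the same value: the digraph is
dimensionally homogeneous. -/
theorem biconnected_dimensionally_homogeneous {V : Type*} (E : V → V → Prop)
    (hfin : ∀ (v : V) (r : ℕ), (gBall E v r).Finite)
    (hbi : ∀ v w : V, Relation.ReflTransGen E v w)
    (v : V) (h : dimLower E v = dimUpper E v) :
    ∀ w : V, dimLower E w = dimUpper E w ∧ dimLower E w = dimLower E v := by
  intro w
  obtain ⟨d, hwv⟩ := exists_mem_gBall_of_reflTransGen (hbi w v)
  obtain ⟨d', hvw⟩ := exists_mem_gBall_of_reflTransGen (hbi v w)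
  have hlower : dimLower E w = dimLower E v :=
    (dimLower_le_of_mem_gBall (hfin v) hwv).antisymm (dimLower_le_of_mem_gBall (hfin w) hvw)
  have hupper : dimUpper E w = dimUpper E v :=
    (dimUpper_le_of_mem_gBall (hfin v) hwv).antisymm (dimUpper_le_of_mem_gBall (hfin w) hvw)
  exact ⟨by rw [hlower, hupper, h], hlower⟩
end

section
/- Let (V,→) be a digraph, X ⊆ A^V a pattern space with weak independence. Suppose there exists v ∈ V with superlinear connectivity (liminf_{r→∞} |B(v,r)|/r = ∞) and positive upper entropy h̄_v(X) := limsup_{r→∞} log₂|X_{B(v,r)}|/|B(v,r)| > 0. If τ : V → V is a moving subsymmetry of X (a subsymmetry with speed(v,τ) > 0 for all v), then the upper τ-entropy h̄(X,τ) := sup over finite F ⊆ V of limsup_{N→∞} (1/N) log₂|X_{∪_{n≤N} τⁿ(F)}| is infinite. -/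
open Filter Topology ENNReal

/-- The set of restrictions to `S` of elements of `X ⊆ A^V`. -/
def restrictSet {V A : Type*} (X : Set (V → A)) (S : Set V) : Set (S → A) :=
  (fun x : V → A => fun u : S => x u.1) '' X

/-- There is an undirected walk of length `n` from `v` to `w`. -/
def walkLen {V : Type*} (E : V → V → Prop) (v w : V) (n : ℕ) : Prop :=
  ∃ f : ℕ → V, f 0 = v ∧ f n = w ∧ ∀ i < n, E (f i) (f (i + 1)) ∨ E (f (i + 1)) (f i)

/-- The undirected graph distance. -/
noncomputable def udist {V : Type*} (E : V → V → Prop) (v w : V) : ℕ∞ :=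
  sInf {n : ℕ∞ | ∃ m : ℕ, n = (m : ℕ∞) ∧ walkLen E v w m}

/-!
Superlinear connectivity and positive upper entropy give, for every `C`, a radius `r` with
`log₂ |X_{B(v,r)}| ≥ C r`. Since `τ` moves `v` at positive speed, some gap `g = O(r)` satisfies
`d(v, τᵐ v) > 2r` for all `m ≥ g`, so the translates `τ^{ig}(B(v,r))` are pairwise disjoint.
Weak independence for singletons (balls of radius `0`) together with subadditivity of
`S ↦ log₂ |X_S|` yields weak independence for arbitrary disjoint finite sets, and `τ`-invariance
of `X` gives each translate at least the entropy of the ball. Hence the orbit of `F = B(v,r)` up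
to time `N` has entropy at least `ε (N / g) C r`, so `h̄(X,τ) ≥ ε C / O(1)` with `C` arbitrary.
-/

section Walks

variable {V : Type*} {E : V → V → Prop}

lemma walkLen_symm {v w : V} {n : ℕ} (h : walkLen E v w n) : walkLen E w v n := by
  obtain ⟨f, hf0, hfn, hstep⟩ := h
  refine ⟨fun i => f (n - i), by simp [hfn], by simp [hf0], fun i hi => ?_⟩
  have := hstep (n - (i + 1)) (by omega)
  rw [show n - (i + 1) + 1 = n - i by omega] at this
  exact this.symm

lemma walkLen_trans {u v w : V} {m n : ℕ} (h₁ : walkLen E u v m) (h₂ : walkLen E v w n) :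
    walkLen E u w (m + n) := by
  obtain ⟨f, hf0, hfm, hf⟩ := h₁
  obtain ⟨g, hg0, hgn, hg⟩ := h₂
  refine ⟨fun i => if i ≤ m then f i else g (i - m), by simp [hf0], ?_, fun i hi => ?_⟩
  · rcases Nat.eq_zero_or_pos n with rfl | hn
    · simp [hfm, ← hg0, hgn]
    · simp [show ¬ m + n ≤ m by omega, hgn]
  · rcases lt_trichotomy i m with h | rfl | h
    · simpa [show i ≤ m by omega, show i + 1 ≤ m by omega] using hf i h
    · simpa [hfm, ← hg0] using hg 0 (by omega)
    · simp only [show ¬ i ≤ m by omega, show ¬ i + 1 ≤ m by omega, if_false,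
        show i + 1 - m = i - m + 1 by omega]
      exact hg (i - m) (by omega)

lemma walkLen_iterate {τ : V → V} (hτ : ∀ a b, E a b → E (τ a) (τ b)) (k : ℕ) {v w : V}
    {n : ℕ} (h : walkLen E v w n) : walkLen E (τ^[k] v) (τ^[k] w) n := by
  have hτk : ∀ a b, E a b → E (τ^[k] a) (τ^[k] b) := by
    induction k with
    | zero => exact fun a b hab => hab
    | succ k ih =>
      intro a b hab
      simpa only [Function.iterate_succ_apply'] using hτ _ _ (ih a b hab)
  obtain ⟨f, hf0, hfn, hstep⟩ := h
  exact ⟨fun i => τ^[k] (f i), by simp [hf0], by simp [hfn],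
    fun i hi => (hstep i hi).imp (hτk _ _) (hτk _ _)⟩

lemma exists_walkLen_of_mem_gBall {v : V} {r : ℕ} {u : V} (hu : u ∈ gBall E v r) :
    ∃ m ≤ r, walkLen E v u m := by
  induction r generalizing u with
  | zero => exact ⟨0, le_rfl, fun _ => v, rfl, hu.symm, by omega⟩
  | succ r ih =>
    rcases hu with hu | ⟨w, hw, hE⟩
    · obtain ⟨m, hm, hwalk⟩ := ih hu
      exact ⟨m, by omega, hwalk⟩
    · obtain ⟨m, hm, hwalk⟩ := ih hw
      have hstep : walkLen E w u 1 :=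
        ⟨fun i => if i = 0 then w else u, by simp, by simp,
          fun i hi => by simp [show i = 0 by omega, hE]⟩
      exact ⟨m + 1, by omega, walkLen_trans hwalk hstep⟩

lemma udist_le_of_walkLen {v w : V} {m : ℕ} (h : walkLen E v w m) : udist E v w ≤ m :=
  sInf_le ⟨m, rfl, h⟩

end Walks

section Geometry

variable {V : Type*} {E : V → V → Prop} {τ : V → V}

lemma exists_lt_mul_of_walkLen_iterate {u : V}
    (hspeed : ∃ S : ℝ≥0∞, 0 < S ∧
      Tendsto (fun n : ℕ => ((udist E u (τ^[n] u) : ℝ≥0∞) / n)) atTop (𝓝 S)) :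
    ∃ k n₀ : ℕ, ∀ n ≥ n₀, ∀ d, walkLen E u (τ^[n] u) d → n < k * d := by
  obtain ⟨S, hS, hlim⟩ := hspeed
  obtain ⟨k, hk⟩ := ENNReal.exists_inv_nat_lt hS.ne'
  obtain ⟨n₀, hn₀⟩ := eventually_atTop.1 (hlim.eventually (Ioi_mem_nhds hk))
  refine ⟨k, max n₀ 1, fun n hn d hd => ?_⟩
  have hlt : (k : ℝ≥0∞)⁻¹ < d / n :=
    (hn₀ n (le_of_max_le_left hn)).trans_le <| by
      gcongr
      exact_mod_cast udist_le_of_walkLen hd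
  rw [ENNReal.lt_div_iff_mul_lt (by simp; omega) (by simp), mul_comm, ← div_eq_mul_inv,
    ENNReal.div_lt_iff (by simp; omega) (by simp)] at hlt
  rw [mul_comm]
  exact_mod_cast hlt

lemma exists_gap_not_walkLen_iterate {v : V} {k n₀ : ℕ}
    (hspeed : ∀ n ≥ n₀, ∀ d, walkLen E v (τ^[n] v) d → n < k * d) {r : ℕ} (hr : 1 ≤ r) :
    ∃ g, 0 < g ∧ g ≤ (n₀ + 2 * k + 1) * r ∧ ∀ m ≥ g, ∀ d ≤ 2 * r, ¬ walkLen E v (τ^[m] v) d := by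
  refine ⟨n₀ + 2 * k * r + 1, by omega, by nlinarith, fun m hm d hd hwalk => ?_⟩
  have := hspeed m (by omega) d hwalk
  have : k * d ≤ 2 * k * r := by nlinarith
  omega

lemma exists_walkLen_iterate_of_mem_gBall (hτ : ∀ a b, E a b → E (τ a) (τ b)) {v x y : V}
    {r m : ℕ} (hx : x ∈ gBall E v r) (hy : y ∈ gBall E v r) (hxy : x = τ^[m] y) :
    ∃ d ≤ 2 * r, walkLen E v (τ^[m] v) d := by
  obtain ⟨d₁, hd₁, hvx⟩ := exists_walkLen_of_mem_gBall hx
  obtain ⟨d₂, hd₂, hvy⟩ := exists_walkLen_of_mem_gBall hy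
  refine ⟨d₁ + d₂, by omega, walkLen_trans hvx ?_⟩
  rw [hxy]
  exact walkLen_iterate hτ m (walkLen_symm hvy)

lemma pairwise_disjoint_image_iterate_gBall (hinj : Function.Injective τ)
    (hτ : ∀ a b, E a b → E (τ a) (τ b)) {v : V} {r g : ℕ}
    (hgap : ∀ m ≥ g, ∀ d ≤ 2 * r, ¬ walkLen E v (τ^[m] v) d) :
    Pairwise fun i j : ℕ => Disjoint (τ^[i * g] '' gBall E v r) (τ^[j * g] '' gBall E v r) := by
  have disjoint_of_lt : ∀ i j : ℕ, i < j →
      Disjoint (τ^[i * g] '' gBall E v r) (τ^[j * g] '' gBall E v r) := by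
    intro i j hij
    rw [Set.disjoint_left]
    rintro _ ⟨x, hx, rfl⟩ ⟨y, hy, hxy⟩
    have hsplit : j * g = i * g + (j - i) * g := by rw [← Nat.add_mul]; congr 1; omega
    rw [hsplit, Function.iterate_add_apply] at hxy
    obtain ⟨d, hd, hwalk⟩ :=
      exists_walkLen_iterate_of_mem_gBall hτ hx hy (hinj.iterate _ hxy).symm
    exact hgap _ (Nat.le_mul_of_pos_left g (by omega)) d hd hwalk
  intro i j hij
  rcases lt_or_gt_of_ne hij with h | h
  · exact disjoint_of_lt i j h
  · exact (disjoint_of_lt j i h).symm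

end Geometry

lemma logb_two_natCast_le_logb_two_natCast {m n : ℕ} (h : m ≤ n) :
    Real.logb 2 m ≤ Real.logb 2 n := by
  rcases Nat.eq_zero_or_pos m with rfl | hm
  · rw [Nat.cast_zero, Real.logb_zero]
    exact div_nonneg (Real.log_natCast_nonneg n) (Real.log_nonneg one_le_two)
  · exact Real.logb_le_logb_of_le one_lt_two (by exact_mod_cast hm) (by exact_mod_cast h)

section PatternEntropy

variable {V A : Type*} {X : Set (V → A)} {S T : Set V}

noncomputable def patternEntropy (X : Set (V → A)) (S : Set V) : ℝ :=
  Real.logb 2 (restrictSet X S).ncard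

lemma patternEntropy_nonneg (X : Set (V → A)) (S : Set V) : 0 ≤ patternEntropy X S := by
  simpa [patternEntropy] using
    logb_two_natCast_le_logb_two_natCast (Nat.zero_le (restrictSet X S).ncard)

variable [Finite A]

lemma restrictSet_finite (X : Set (V → A)) (hS : S.Finite) : (restrictSet X S).Finite :=
  have := hS.to_subtype
  Set.toFinite _

lemma patternEntropy_mono (hST : S ⊆ T) (hT : T.Finite) :
    patternEntropy X S ≤ patternEntropy X T := by
  have hsub : restrictSet X S ⊆ (fun y : T → A => y ∘ Set.inclusion hST) '' restrictSet X T := by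
    rintro _ ⟨x, hx, rfl⟩
    exact ⟨_, ⟨x, hx, rfl⟩, rfl⟩
  refine logb_two_natCast_le_logb_two_natCast ?_
  exact (Set.ncard_le_ncard hsub ((restrictSet_finite X hT).image _)).trans
    (Set.ncard_image_le (restrictSet_finite X hT))

lemma patternEntropy_le_image {τ : V → V} (hτX : X ⊆ (fun a : V → A => a ∘ τ) '' X)
    (hS : S.Finite) : patternEntropy X S ≤ patternEntropy X (τ '' S) := by
  let pull : (τ '' S → A) → (S → A) := fun y u => y ⟨τ u, Set.mem_image_of_mem τ u.2⟩
  have hsub : restrictSet X S ⊆ pull '' restrictSet X (τ '' S) := by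
    rintro _ ⟨x, hx, rfl⟩
    obtain ⟨x', hx', rfl⟩ := hτX hx
    exact ⟨_, ⟨x', hx', rfl⟩, rfl⟩
  have hfin := restrictSet_finite X (hS.image τ)
  exact logb_two_natCast_le_logb_two_natCast
    ((Set.ncard_le_ncard hsub (hfin.image _)).trans (Set.ncard_image_le hfin))

lemma patternEntropy_le_image_iterate {τ : V → V} (hτX : X ⊆ (fun a : V → A => a ∘ τ) '' X)
    (hS : S.Finite) (k : ℕ) : patternEntropy X S ≤ patternEntropy X (τ^[k] '' S) := by
  induction k with
  | zero => simp
  | succ k ih =>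
    rw [Function.iterate_succ', Set.image_comp]
    exact ih.trans (patternEntropy_le_image hτX (hS.image _))

lemma restrictSet_union_ncard_le (hS : S.Finite) (hT : T.Finite) :
    (restrictSet X (S ∪ T)).ncard ≤ (restrictSet X S).ncard * (restrictSet X T).ncard := by
  let split : (↥(S ∪ T) → A) → (S → A) × (T → A) := fun y =>
    (y ∘ Set.inclusion Set.subset_union_left, y ∘ Set.inclusion Set.subset_union_right)
  have hinj : Function.Injective split := by
    intro y y' h
    funext ⟨w, hw⟩
    rcases hw with hw | hw
    · exact congrFun (congrArg Prod.fst h) ⟨w, hw⟩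
    · exact congrFun (congrArg Prod.snd h) ⟨w, hw⟩
  have hsub : split '' restrictSet X (S ∪ T) ⊆ restrictSet X S ×ˢ restrictSet X T := by
    rintro _ ⟨_, ⟨x, hx, rfl⟩, rfl⟩
    exact ⟨⟨x, hx, rfl⟩, ⟨x, hx, rfl⟩⟩
  rw [← Set.ncard_image_of_injective _ hinj, ← Set.ncard_prod]
  exact Set.ncard_le_ncard hsub ((restrictSet_finite X hS).prod (restrictSet_finite X hT))

lemma patternEntropy_union_le (hS : S.Finite) (hT : T.Finite) :
    patternEntropy X (S ∪ T) ≤ patternEntropy X S + patternEntropy X T := by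
  rcases X.eq_empty_or_nonempty with rfl | hX
  · simp [patternEntropy, restrictSet]
  have hpos : ∀ {U : Set V}, U.Finite → (0 : ℝ) < (restrictSet X U).ncard := fun hU => by
    exact_mod_cast (Set.ncard_pos (restrictSet_finite X hU)).2 (hX.image _)
  rw [patternEntropy, patternEntropy, patternEntropy, ← Real.logb_mul (hpos hS).ne' (hpos hT).ne']
  exact Real.logb_le_logb_of_le one_lt_two (hpos (hS.union hT))
    (by exact_mod_cast restrictSet_union_ncard_le hS hT)

lemma patternEntropy_le_sum_singleton (X : Set (V → A)) (D : Finset V) :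
    patternEntropy X D ≤ ∑ u ∈ D, patternEntropy X {u} := by
  classical
  induction D using Finset.induction_on with
  | empty =>
    simpa [patternEntropy] using
      logb_two_natCast_le_logb_two_natCast (Set.ncard_le_one_of_subsingleton _)
  | insert a D ha ih =>
    rw [Finset.sum_insert ha, Finset.coe_insert, Set.insert_eq]
    linarith [patternEntropy_union_le (X := X) (Set.finite_singleton a) D.finite_toSet]

end PatternEntropy

section WeakIndependence

variable {V A : Type*} {E : V → V → Prop} {X : Set (V → A)} {ε : ℝ}

def IsWeaklyIndependent (E : V → V → Prop) (X : Set (V → A)) (ε : ℝ) : Prop :=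
  ∀ (N : ℕ) (ctr : Fin N → V) (rad : Fin N → ℕ),
    (Pairwise fun i j => Disjoint (gBall E (ctr i) (rad i)) (gBall E (ctr j) (rad j))) →
    ε * ∑ i, patternEntropy X (gBall E (ctr i) (rad i)) ≤
      patternEntropy X (⋃ i, gBall E (ctr i) (rad i))

/-- Singletons are the balls of radius `0`. -/
lemma IsWeaklyIndependent.sum_singleton_le (hWI : IsWeaklyIndependent E X ε) (D : Finset V) :
    ε * ∑ u ∈ D, patternEntropy X {u} ≤ patternEntropy X D := by
  let ctr : Fin D.card → V := fun i => D.equivFin.symm i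
  have hctr : Function.Injective ctr := Subtype.val_injective.comp D.equivFin.symm.injective
  have hdisj : Pairwise fun i j => Disjoint (gBall E (ctr i) 0) (gBall E (ctr j) 0) :=
    fun i j hij => Set.disjoint_singleton.2 (hctr.ne hij)
  have hunion : (⋃ i, gBall E (ctr i) 0) = D := by
    change (⋃ i, {ctr i}) = _
    rw [Set.iUnion_singleton_eq_range]
    exact (D.equivFin.symm.surjective.range_comp _).trans Subtype.range_coe
  have hsum : ∑ i, patternEntropy X (gBall E (ctr i) 0) = ∑ u ∈ D, patternEntropy X {u} := by
    rw [← Finset.sum_coe_sort D]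
    exact Equiv.sum_comp D.equivFin.symm (fun u : D => patternEntropy X {(u : V)})
  simpa only [hsum, hunion] using hWI D.card ctr (fun _ => 0) hdisj

lemma IsWeaklyIndependent.sum_le_biUnion [Finite A] [DecidableEq V]
    (hWI : IsWeaklyIndependent E X ε) (hε : 0 ≤ ε) {ι : Type*} {I : Finset ι}
    {F : ι → Finset V} (hF : (I : Set ι).PairwiseDisjoint F) :
    ε * ∑ i ∈ I, patternEntropy X (F i) ≤ patternEntropy X (I.biUnion F) :=
  calc ε * ∑ i ∈ I, patternEntropy X (F i)
      ≤ ε * ∑ i ∈ I, ∑ u ∈ F i, patternEntropy X {u} := by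
        gcongr with i
        exact patternEntropy_le_sum_singleton X (F i)
    _ = ε * ∑ u ∈ I.biUnion F, patternEntropy X {u} := by rw [Finset.sum_biUnion hF]
    _ ≤ patternEntropy X (I.biUnion F) := hWI.sum_singleton_le _

end WeakIndependence

section OrbitEntropy

variable {V A : Type*} {X : Set (V → A)} {τ : V → V}

noncomputable def upperOrbitEntropy (X : Set (V → A)) (τ : V → V) (F : Finset V) : EReal :=
  limsup (fun N : ℕ => (((1 : ℝ) / N *
    patternEntropy X (⋃ n ∈ Finset.range (N + 1), τ^[n] '' (F : Set V)) : ℝ) : EReal)) atTop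

lemma le_limsup_one_div_mul {f : ℕ → ℝ} {g : ℕ} (hg : 0 < g) {L : ℝ} (hL : 0 ≤ L)
    (hf : ∀ N, ((N / g + 1 : ℕ) : ℝ) * L ≤ f N) :
    ((L / g : ℝ) : EReal) ≤ limsup (fun N : ℕ => (((1 : ℝ) / N * f N : ℝ) : EReal)) atTop := by
  refine le_limsup_of_frequently_le ((eventually_ge_atTop 1).mono fun N hN => ?_).frequently
    (by isBoundedDefault)
  have hNg : (N : ℝ) ≤ ((N / g + 1 : ℕ) : ℝ) * g := by
    exact_mod_cast (mul_comm g _ ▸ Nat.lt_mul_div_succ N hg).le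
  have hN' : (0 : ℝ) < N := by exact_mod_cast hN
  rw [EReal.coe_le_coe_iff, one_div_mul_eq_div, le_div_iff₀ hN']
  calc L / g * N ≤ L / g * (((N / g + 1 : ℕ) : ℝ) * g) := by gcongr
    _ = ((N / g + 1 : ℕ) : ℝ) * L := by field_simp
    _ ≤ f N := hf N

lemma mul_le_patternEntropy_orbit [Finite A] {E : V → V → Prop} {ε : ℝ}
    (hWI : IsWeaklyIndependent E X ε) (hε : 0 ≤ ε) (hτX : X ⊆ (fun a : V → A => a ∘ τ) '' X)
    {F : Finset V} {g : ℕ}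
    (hdisj : Pairwise fun i j : ℕ => Disjoint (τ^[i * g] '' (F : Set V)) (τ^[j * g] '' F))
    (N : ℕ) : ((N / g + 1 : ℕ) : ℝ) * (ε * patternEntropy X F) ≤
      patternEntropy X (⋃ n ∈ Finset.range (N + 1), τ^[n] '' (F : Set V)) := by
  classical
  set K := N / g
  have hsub : ((Finset.range (K + 1)).biUnion fun i => F.image τ^[i * g] : Set V) ⊆
      ⋃ n ∈ Finset.range (N + 1), τ^[n] '' (F : Set V) := by
    intro _ ha
    simp only [Finset.coe_biUnion, Finset.coe_image, Finset.coe_range, Set.mem_Iio,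
      Set.mem_iUnion] at ha
    obtain ⟨i, hi, hx⟩ := ha
    have hiN : i * g ≤ N :=
      (Nat.mul_le_mul_right g (Nat.lt_succ_iff.1 hi)).trans (Nat.div_mul_le_self N g)
    exact Set.mem_biUnion (Finset.mem_range_succ_iff.2 hiN) hx
  have hdisj' : ((Finset.range (K + 1) : Finset ℕ) : Set ℕ).PairwiseDisjoint
      fun i => F.image τ^[i * g] :=
    fun i _ j _ hij => Finset.disjoint_coe.1 (by simpa using hdisj hij)
  calc ((K + 1 : ℕ) : ℝ) * (ε * patternEntropy X F)
      = ε * ∑ _i ∈ Finset.range (K + 1), patternEntropy X F := by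
        rw [Finset.sum_const, Finset.card_range, nsmul_eq_mul]; ring
    _ ≤ ε * ∑ i ∈ Finset.range (K + 1), patternEntropy X (F.image τ^[i * g] : Finset V) := by
        gcongr with i
        rw [Finset.coe_image]
        exact patternEntropy_le_image_iterate hτX F.finite_toSet _
    _ ≤ patternEntropy X ((Finset.range (K + 1)).biUnion fun i => F.image τ^[i * g]) :=
        hWI.sum_le_biUnion hε hdisj'
    _ ≤ _ := patternEntropy_mono hsub <|
        (Finset.range (N + 1)).finite_toSet.biUnion fun n _ => F.finite_toSet.image _

end OrbitEntropy

lemma frequently_mul_le_patternEntropy_gBall {V A : Type*} {E : V → V → Prop}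
    {X : Set (V → A)} {v : V}
    (hsuper : Tendsto (fun r : ℕ => ((gBall E v r).ncard : ℝ) / r) atTop atTop)
    (hent : 0 < limsup (fun r : ℕ =>
      ((patternEntropy X (gBall E v r) / (gBall E v r).ncard : ℝ) : EReal)) atTop)
    (C : ℝ) : ∃ᶠ r : ℕ in atTop, C * r ≤ patternEntropy X (gBall E v r) := by
  obtain ⟨c, hc, hclt⟩ := EReal.lt_iff_exists_real_btwn.1 hent
  replace hc : 0 < c := by exact_mod_cast hc
  refine ((frequently_lt_of_lt_limsup (by isBoundedDefault) hclt).and_eventually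
    ((hsuper.eventually_ge_atTop (C / c)).and (eventually_gt_atTop 0))).mono ?_
  rintro r ⟨hratio, hball, hr⟩
  replace hr : (0 : ℝ) < r := by exact_mod_cast hr
  replace hratio := EReal.coe_lt_coe_iff.1 hratio
  -- `x / 0 = 0`, so a positive ratio forces a nonempty ball
  have hcard : (0 : ℝ) < (gBall E v r).ncard := by
    by_contra! h
    have h0 : ((gBall E v r).ncard : ℝ) = 0 := le_antisymm h (Nat.cast_nonneg _)
    rw [h0, div_zero (patternEntropy X (gBall E v r))] at hratio
    linarith
  rw [div_le_div_iff₀ hc hr] at hball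
  rw [lt_div_iff₀ hcard] at hratio
  nlinarith

lemma exists_le_upperOrbitEntropy {V A : Type*} [Finite A] {E : V → V → Prop} {X : Set (V → A)}
    {ε : ℝ} (hWI : IsWeaklyIndependent E X ε) (hε : 0 < ε) {v : V}
    (hfin : ∀ r, (gBall E v r).Finite)
    (hsuper : Tendsto (fun r : ℕ => ((gBall E v r).ncard : ℝ) / r) atTop atTop)
    (hent : 0 < limsup (fun r : ℕ =>
      ((patternEntropy X (gBall E v r) / (gBall E v r).ncard : ℝ) : EReal)) atTop)
    {τ : V → V} (hinj : Function.Injective τ) (hτ : ∀ a b, E a b → E (τ a) (τ b))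
    (hτX : X ⊆ (fun a : V → A => a ∘ τ) '' X)
    (hspeed : ∃ S : ℝ≥0∞, 0 < S ∧
      Tendsto (fun n : ℕ => ((udist E v (τ^[n] v) : ℝ≥0∞) / n)) atTop (𝓝 S))
    (M : ℝ) : ∃ F : Finset V, (M : EReal) ≤ upperOrbitEntropy X τ F := by
  obtain ⟨k, n₀, hlinear⟩ := exists_lt_mul_of_walkLen_iterate hspeed
  set G : ℕ := n₀ + 2 * k + 1
  obtain ⟨r, hrent, hr⟩ := ((frequently_mul_le_patternEntropy_gBall hsuper hent
    (G * max M 0 / ε)).and_eventually (eventually_ge_atTop 1)).exists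
  obtain ⟨g, hg, hgG, hgap⟩ := exists_gap_not_walkLen_iterate hlinear hr
  refine ⟨(hfin r).toFinset, ?_⟩
  have hdisj := pairwise_disjoint_image_iterate_gBall hinj hτ hgap
  rw [← (hfin r).coe_toFinset] at hrent hdisj
  refine le_trans ?_ (le_limsup_one_div_mul hg (mul_nonneg hε.le (patternEntropy_nonneg _ _))
    (mul_le_patternEntropy_orbit hWI hε.le hτX hdisj))
  have hgG : (g : ℝ) ≤ G * r := by exact_mod_cast hgG
  have hg : (0 : ℝ) < g := by exact_mod_cast hg
  rw [EReal.coe_le_coe_iff, le_div_iff₀ hg]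
  calc M * g ≤ max M 0 * (G * r) := by gcongr; exact le_max_left _ _
    _ = ε * (G * max M 0 / ε * r) := by field_simp
    _ ≤ _ := by gcongr

theorem tau_entropy_infinite_general {V A : Type*} [Fintype A]
    (E : V → V → Prop) (hfin : ∀ (v : V) (r : ℕ), (gBall E v r).Finite)
    (X : Set (V → A))
    (hWI : ∃ ε > (0 : ℝ), ∀ (N : ℕ) (ctr : Fin N → V) (rad : Fin N → ℕ),
      (Pairwise fun i j => Disjoint (gBall E (ctr i) (rad i)) (gBall E (ctr j) (rad j))) →
      ε * ∑ i, Real.logb 2 ((restrictSet X (gBall E (ctr i) (rad i))).ncard) ≤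
        Real.logb 2 ((restrictSet X (⋃ i, gBall E (ctr i) (rad i))).ncard))
    (v : V)
    (hsuper : Filter.Tendsto (fun r : ℕ => ((gBall E v r).ncard : ℝ) / r)
      Filter.atTop Filter.atTop)
    (hent : 0 < Filter.limsup (fun r : ℕ =>
      ((Real.logb 2 ((restrictSet X (gBall E v r)).ncard) / ((gBall E v r).ncard : ℝ)
        : ℝ) : EReal)) Filter.atTop)
    (τ : V → V) (hinj : Function.Injective τ)
    (hiso : ∀ a b : V, E a b ↔ E (τ a) (τ b))
    (hτX : (fun a : V → A => a ∘ τ) '' X = X)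
    (hmoving : ∀ u : V, ∃ S : ℝ≥0∞, 0 < S ∧
      Filter.Tendsto (fun n : ℕ => ((udist E u (τ^[n] u) : ℝ≥0∞) / n))
        Filter.atTop (nhds S)) :
    (⨆ F : Finset V, Filter.limsup (fun N : ℕ =>
        (((1 : ℝ) / N * Real.logb 2
          ((restrictSet X (⋃ n ∈ Finset.range (N + 1), τ^[n] '' (F : Set V))).ncard)
            : ℝ) : EReal)) Filter.atTop) = (⊤ : EReal) := by
  obtain ⟨ε, hε, hWI⟩ := hWI
  refine iSup_eq_top.2 fun b hb => ?_
  obtain ⟨M, hbM, -⟩ := EReal.lt_iff_exists_real_btwn.1 hb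
  obtain ⟨F, hF⟩ := exists_le_upperOrbitEntropy hWI hε (hfin v) hsuper hent hinj
    (fun a b => (hiso a b).1) hτX.superset (hmoving v) M
  exact ⟨F, hbM.trans_le hF⟩

/-- If `X ⊆ A^V` has weak independence, some vertex `v` has superlinear connectivity and
positive upper entropy, and `τ` is a moving subsymmetry of `X`, then the upper
`τ`-entropy `h̄(X,τ) = sup_F limsup_N (1/N) log₂|X_{⋃_{n≤N} τⁿ(F)}|` is infinite. -/
theorem tau_entropy_infinite {V A : Type*} [Fintype A]
    [TopologicalSpace A] [DiscreteTopology A]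
    (E : V → V → Prop) (hfin : ∀ (v : V) (r : ℕ), (gBall E v r).Finite)
    (X : Set (V → A)) (hX : IsClosed X)
    (hWI : ∃ ε > (0 : ℝ), ∀ (N : ℕ) (ctr : Fin N → V) (rad : Fin N → ℕ),
      (Pairwise fun i j => Disjoint (gBall E (ctr i) (rad i)) (gBall E (ctr j) (rad j))) →
      ε * ∑ i, Real.logb 2 ((restrictSet X (gBall E (ctr i) (rad i))).ncard) ≤
        Real.logb 2 ((restrictSet X (⋃ i, gBall E (ctr i) (rad i))).ncard))
    (v : V)
    (hsuper : Filter.Tendsto (fun r : ℕ => ((gBall E v r).ncard : ℝ) / r)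
      Filter.atTop Filter.atTop)
    (hent : 0 < Filter.limsup (fun r : ℕ =>
      ((Real.logb 2 ((restrictSet X (gBall E v r)).ncard) / ((gBall E v r).ncard : ℝ)
        : ℝ) : EReal)) Filter.atTop)
    (τ : V → V) (hinj : Function.Injective τ)
    (hiso : ∀ a b : V, E a b ↔ E (τ a) (τ b))
    (hτX : (fun a : V → A => a ∘ τ) '' X = X)
    (hmoving : ∀ u : V, ∃ S : ℝ≥0∞, 0 < S ∧
      Filter.Tendsto (fun n : ℕ => ((udist E u (τ^[n] u) : ℝ≥0∞) / n))
        Filter.atTop (nhds S)) :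
    (⨆ F : Finset V, Filter.limsup (fun N : ℕ =>
        (((1 : ℝ) / N * Real.logb 2
          ((restrictSet X (⋃ n ∈ Finset.range (N + 1), τ^[n] '' (F : Set V))).ncard)
            : ℝ) : EReal)) Filter.atTop) = (⊤ : EReal) :=
  tau_entropy_infinite_general E hfin X hWI v hsuper hent τ hinj hiso hτX hmoving
end

section
/- Let (A^V, X, Φ) be a symbolic dynamical system with a subsymmetry τ : V → V (a subisometry with τ_*(X) = X and τ_* ∘ Φ = Φ ∘ τ_*). If the upper τ-entropy h̄(X,τ) is infinite, then (X,Φ) is not positively expansive; i.e., there is no finite W ⊆ V such that the map x ↦ (Φᵗ(x)_W)_{t∈ℕ} is injective on X. -/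
open Filter Topology

/-- If `(A^V, X, Φ)` is a symbolic dynamical system with a subsymmetry `τ` (an injection
preserving the network in both directions, with `τ_*(X) = X` and `τ_* ∘ Φ = Φ ∘ τ_*`)
and the upper `τ`-entropy is infinite, then `(X,Φ)` is not positively expansive: no
finite window `W` makes `x ↦ (Φᵗ(x)|_W)_{t∈ℕ}` injective on `X`. -/
theorem not_posexpansive_of_infinite_tau_entropy {V A : Type*} [Countable V] [Fintype A]
    [TopologicalSpace A] [DiscreteTopology A]
    (E : V → V → Prop)
    (X : Set (V → A)) (hX : Perfect X)
    (Φ : (V → A) → (V → A)) (hΦ : Continuous Φ) (hm : Set.MapsTo Φ X X)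
    (τ : V → V) (hinj : Function.Injective τ)
    (hiso : ∀ a b : V, E a b ↔ E (τ a) (τ b))
    (hτX : (fun a : V → A => a ∘ τ) '' X = X)
    (hτΦ : ∀ a : V → A, (Φ a) ∘ τ = Φ (a ∘ τ))
    (hEnt : (⨆ F : Finset V, Filter.limsup (fun N : ℕ =>
        (((1 : ℝ) / N * Real.logb 2
          ((restrictSet X (⋃ n ∈ Finset.range (N + 1), τ^[n] '' (F : Set V))).ncard)
            : ℝ) : EReal)) Filter.atTop) = (⊤ : EReal)) :
    ¬ ∃ W : Finset V, ∀ x ∈ X, ∀ y ∈ X,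
        (∀ (t : ℕ), ∀ w ∈ W, Φ^[t] x w = Φ^[t] y w) → x = y := by
  classical
  rintro ⟨W, hW⟩
  have hXc : IsClosed X := hX.closed
  have hΦi : ∀ t : ℕ, Continuous (Φ^[t]) := fun t => hΦ.iterate t
  -- uniform coding lemma, by compactness
  have key : ∀ F : Finset V, ∃ T : ℕ, ∀ x ∈ X, ∀ y ∈ X,
      (∀ t < T, ∀ w ∈ W, Φ^[t] x w = Φ^[t] y w) → ∀ v ∈ F, x v = y v := by
    intro F
    by_contra h
    push_neg at h
    choose x hx y hy hag v hvF hne using h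
    have hcomp : IsCompact (X ×ˢ X) := (hXc.isCompact).prod (hXc.isCompact)
    set u : ℕ → (V → A) × (V → A) := fun T => (x T, y T) with hu
    have hle : Filter.map u atTop ≤ 𝓟 (X ×ˢ X) := by
      rw [Filter.le_principal_iff, Filter.mem_map]
      exact Filter.Eventually.of_forall fun T => Set.mk_mem_prod (hx T) (hy T)
    obtain ⟨p, hpX, hp⟩ := hcomp.exists_clusterPt hle
    have hagree : ∀ (t : ℕ), ∀ w ∈ W, Φ^[t] p.1 w = Φ^[t] p.2 w := by
      intro t w hw
      have hSclosed : IsClosed {q : (V → A) × (V → A) | Φ^[t] q.1 w = Φ^[t] q.2 w} :=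
        isClosed_eq ((continuous_apply (w : V)).comp ((hΦi t).comp continuous_fst))
          ((continuous_apply (w : V)).comp ((hΦi t).comp continuous_snd))
      have hmem : {q : (V → A) × (V → A) | Φ^[t] q.1 w = Φ^[t] q.2 w}
          ∈ Filter.map u atTop := by
        rw [Filter.mem_map]
        filter_upwards [Filter.eventually_ge_atTop (t + 1)] with T hT
        exact hag T t (by omega) w hw
      have h1 := hp.mono (Filter.le_principal_iff.2 hmem)
      have h2 : p ∈ closure {q : (V → A) × (V → A) | Φ^[t] q.1 w = Φ^[t] q.2 w} :=
        mem_closure_iff_clusterPt.2 h1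
      rwa [hSclosed.closure_eq] at h2
    have hD : p ∈ {q : (V → A) × (V → A) | ∃ v ∈ F, q.1 v ≠ q.2 v} := by
      have hDclosed : IsClosed {q : (V → A) × (V → A) | ∃ v ∈ F, q.1 v ≠ q.2 v} := by
        have heq : {q : (V → A) × (V → A) | ∃ v ∈ F, q.1 v ≠ q.2 v}
            = ⋃ v ∈ (F : Set V), {q : (V → A) × (V → A) | q.1 v ≠ q.2 v} := by
          ext q; simp
        rw [heq]
        refine Set.Finite.isClosed_biUnion (F.finite_toSet) fun v _ => ?_
        have hop : IsOpen {q : (V → A) × (V → A) | q.1 v = q.2 v} := by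
          have hc : Continuous fun q : (V → A) × (V → A) => (q.1 v, q.2 v) :=
            ((continuous_apply v).comp continuous_fst).prodMk
              ((continuous_apply v).comp continuous_snd)
          exact (isOpen_discrete {r : A × A | r.1 = r.2}).preimage hc
        simpa [Set.compl_setOf] using hop.isClosed_compl
      have hmem : {q : (V → A) × (V → A) | ∃ v ∈ F, q.1 v ≠ q.2 v}
          ∈ Filter.map u atTop := by
        rw [Filter.mem_map]
        exact Filter.Eventually.of_forall fun T => ⟨v T, hvF T, hne T⟩
      have h1 := hp.mono (Filter.le_principal_iff.2 hmem)
      have h2 := mem_closure_iff_clusterPt.2 h1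
      rwa [hDclosed.closure_eq] at h2
    obtain ⟨v0, _, hne0⟩ := hD
    exact hne0 (congrFun (hW p.1 hpX.1 p.2 hpX.2 hagree) v0)
  choose TF hTF using key
  set T₁ : ℕ := TF (W.image τ) with hT₁def
  -- closure of X under precomposition with τ and its iterates
  have hmemτ : ∀ x ∈ X, x ∘ τ ∈ X := by
    intro x hx
    have : x ∘ τ ∈ (fun a : V → A => a ∘ τ) '' X := ⟨x, hx, rfl⟩
    rwa [hτX] at this
  have hmemτn : ∀ n : ℕ, ∀ x ∈ X, x ∘ τ^[n] ∈ X := by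
    intro n
    induction n with
    | zero => intro x hx; simpa using hx
    | succ n ih =>
      intro x hx
      have : x ∘ τ^[n + 1] = (x ∘ τ^[n]) ∘ τ := by
        rw [Function.iterate_succ]; rfl
      rw [this]
      exact hmemτ _ (ih x hx)
  have hΦmem : ∀ t : ℕ, ∀ x ∈ X, Φ^[t] x ∈ X := fun t x hx => hm.iterate t hx
  -- Φ iterates commute with τ
  have hτΦiter : ∀ t : ℕ, ∀ x : V → A, (Φ^[t] x) ∘ τ = Φ^[t] (x ∘ τ) := by
    intro t
    induction t with
    | zero => intro x; rfl
    | succ t ih =>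
      intro x
      rw [Function.iterate_succ_apply, Function.iterate_succ_apply, ih, hτΦ]
  -- sliding block property
  have SB : ∀ m : ℕ, ∀ x ∈ X, ∀ y ∈ X,
      (∀ t < m + T₁, ∀ w ∈ W, Φ^[t] x w = Φ^[t] y w) →
      ∀ t < m, ∀ w ∈ W, Φ^[t] (x ∘ τ) w = Φ^[t] (y ∘ τ) w := by
    intro m x hx y hy hag t ht w hw
    have hcode : ∀ s < T₁, ∀ w' ∈ W, Φ^[s] (Φ^[t] x) w' = Φ^[s] (Φ^[t] y) w' := by
      intro s hs w' hw'
      have h1 : Φ^[s + t] x w' = Φ^[s + t] y w' := hag (s + t) (by omega) w' hw'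
      rwa [Function.iterate_add_apply, Function.iterate_add_apply] at h1
    have := hTF (W.image τ) (Φ^[t] x) (hΦmem t x hx) (Φ^[t] y) (hΦmem t y hy) hcode
      (τ w) (Finset.mem_image_of_mem τ hw)
    calc Φ^[t] (x ∘ τ) w = ((Φ^[t] x) ∘ τ) w := by rw [hτΦiter]
      _ = ((Φ^[t] y) ∘ τ) w := this
      _ = Φ^[t] (y ∘ τ) w := by rw [hτΦiter]
  -- iterated sliding block
  have Q : ∀ n : ℕ, ∀ m : ℕ, ∀ x ∈ X, ∀ y ∈ X,
      (∀ t < m + n * T₁, ∀ w ∈ W, Φ^[t] x w = Φ^[t] y w) →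
      ∀ t < m, ∀ w ∈ W, Φ^[t] (x ∘ τ^[n]) w = Φ^[t] (y ∘ τ^[n]) w := by
    intro n
    induction n with
    | zero =>
      intro m x _ y _ hag t ht w hw
      simpa using hag t (by omega) w hw
    | succ n ih =>
      intro m x hx y hy hag t ht w hw
      have h1 := ih (m + T₁) x hx y hy (fun t' ht' w' hw' => hag t' (by
        have : m + T₁ + n * T₁ = m + (n + 1) * T₁ := by ring
        omega) w' hw')
      have h2 := SB m (x ∘ τ^[n]) (hmemτn n x hx) (y ∘ τ^[n]) (hmemτn n y hy) h1 t ht w hw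
      have h3 : ∀ z : V → A, (z ∘ τ^[n]) ∘ τ = z ∘ τ^[n + 1] := by
        intro z; rw [Function.iterate_succ]; rfl
      rwa [h3, h3] at h2
  -- agreement on the moved region
  have hagrN : ∀ F : Finset V, ∀ N : ℕ, ∀ x ∈ X, ∀ y ∈ X,
      (∀ t < TF F + N * T₁, ∀ w ∈ W, Φ^[t] x w = Φ^[t] y w) →
      ∀ v ∈ (⋃ n ∈ Finset.range (N + 1), τ^[n] '' (F : Set V)), x v = y v := by
    intro F N x hx y hy hag v hv
    simp only [Set.mem_iUnion, Finset.mem_range] at hv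
    obtain ⟨n, hn, f, hf, rfl⟩ := hv
    have hcode := Q n (TF F) x hx y hy (fun t ht w hw => hag t (by
      have h1 : n * T₁ ≤ N * T₁ := Nat.mul_le_mul_right _ (by omega)
      omega) w hw)
    have := hTF F (x ∘ τ^[n]) (hmemτn n x hx) (y ∘ τ^[n]) (hmemτn n y hy) hcode f hf
    simpa using this
  -- counting bound
  set M : ℕ := Fintype.card A + 1 with hMdef
  have hcard : ∀ F : Finset V, ∀ N : ℕ,
      (restrictSet X (⋃ n ∈ Finset.range (N + 1), τ^[n] '' (F : Set V))).ncard
        ≤ M ^ (W.card * (TF F + N * T₁)) := by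
    intro F N
    set S : Set V := ⋃ n ∈ Finset.range (N + 1), τ^[n] '' (F : Set V) with hSdef
    set L : ℕ := TF F + N * T₁ with hLdef
    have hpick : ∀ p : restrictSet X S, ∃ x, x ∈ X ∧ (fun u : S => x u.1) = p.1 :=
      fun p => p.2
    choose pick pickX pickEq using hpick
    set G : restrictSet X S → (Fin L → W → A) :=
      fun p s w => Φ^[s.1] (pick p) w.1 with hGdef
    have hGinj : Function.Injective G := by
      intro p q hpq
      have hcode : ∀ t < L, ∀ w ∈ W, Φ^[t] (pick p) w = Φ^[t] (pick q) w := by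
        intro t ht w hw
        exact congrFun (congrFun hpq ⟨t, ht⟩) ⟨w, hw⟩
      have hagr := hagrN F N (pick p) (pickX p) (pick q) (pickX q) hcode
      apply Subtype.ext
      rw [← pickEq p, ← pickEq q]
      funext u
      exact hagr u.1 u.2
    have h1 : (restrictSet X S).ncard ≤ Nat.card (Fin L → W → A) := by
      rw [← Nat.card_coe_set_eq]
      exact Nat.card_le_card_of_injective G hGinj
    have h2 : Nat.card (Fin L → W → A) = (Fintype.card A ^ W.card) ^ L := by
      simp [Nat.card_fun, Nat.card_eq_fintype_card]
    calc (restrictSet X S).ncard ≤ (Fintype.card A ^ W.card) ^ L := by rw [← h2]; exact h1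
      _ = Fintype.card A ^ (W.card * L) := by rw [pow_mul]
      _ ≤ M ^ (W.card * L) := Nat.pow_le_pow_left (Nat.le_succ _) _
  -- logarithmic bound
  have hM1 : (1 : ℝ) ≤ (M : ℝ) := by
    simp only [hMdef]; push_cast; linarith [Nat.cast_nonneg (α := ℝ) (Fintype.card A)]
  have hlogM : (0 : ℝ) ≤ Real.logb 2 M := Real.logb_nonneg one_lt_two hM1
  have hlog : ∀ F : Finset V, ∀ N : ℕ,
      Real.logb 2 ((restrictSet X (⋃ n ∈ Finset.range (N + 1), τ^[n] '' (F : Set V))).ncard)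
        ≤ (W.card * (TF F + N * T₁) : ℕ) * Real.logb 2 M := by
    intro F N
    set k : ℕ := W.card * (TF F + N * T₁)
    set c : ℕ := (restrictSet X (⋃ n ∈ Finset.range (N + 1), τ^[n] '' (F : Set V))).ncard
    have hc : c ≤ M ^ k := hcard F N
    rcases Nat.eq_zero_or_pos c with hc0 | hc0
    · rw [hc0]
      simp only [Nat.cast_zero, Real.logb_zero]
      positivity
    · have h1 : Real.logb 2 c ≤ Real.logb 2 (M ^ k : ℕ) := by
        apply Real.logb_le_logb_of_le one_lt_two
        · exact_mod_cast hc0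
        · exact_mod_cast hc
      calc Real.logb 2 c ≤ Real.logb 2 ((M : ℝ) ^ k) := by push_cast at h1 ⊢; exact h1
        _ = k * Real.logb 2 M := by rw [Real.logb_pow]
  -- limsup bound, uniform over F
  set b : ℝ := (W.card * T₁) * Real.logb 2 M with hbdef
  have hbnd : ∀ F : Finset V, Filter.limsup (fun N : ℕ =>
      (((1 : ℝ) / N * Real.logb 2
        ((restrictSet X (⋃ n ∈ Finset.range (N + 1), τ^[n] '' (F : Set V))).ncard)
          : ℝ) : EReal)) Filter.atTop ≤ (b : EReal) := by
    intro F
    set a : ℝ := (W.card * TF F) * Real.logb 2 M with hadef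
    have hg : Filter.Tendsto (fun N : ℕ => ((a / N + b : ℝ) : EReal)) atTop (𝓝 (b : EReal)) := by
      rw [EReal.tendsto_coe]
      have := (tendsto_const_div_atTop_nhds_zero_nat a).add (tendsto_const_nhds (x := b))
      simpa using this
    have hfg : (fun N : ℕ =>
        (((1 : ℝ) / N * Real.logb 2
          ((restrictSet X (⋃ n ∈ Finset.range (N + 1), τ^[n] '' (F : Set V))).ncard)
            : ℝ) : EReal)) ≤ᶠ[atTop] fun N : ℕ => ((a / N + b : ℝ) : EReal) := by
      filter_upwards [Filter.eventually_ge_atTop 1] with N hN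
      rw [EReal.coe_le_coe_iff]
      have hN0 : (0 : ℝ) < (N : ℝ) := by exact_mod_cast hN
      have h1 : (1 : ℝ) / N * Real.logb 2
          ((restrictSet X (⋃ n ∈ Finset.range (N + 1), τ^[n] '' (F : Set V))).ncard)
          ≤ (1 : ℝ) / N * ((W.card * (TF F + N * T₁) : ℕ) * Real.logb 2 M) := by
        apply mul_le_mul_of_nonneg_left (hlog F N)
        positivity
      have h2 : (1 : ℝ) / N * ((W.card * (TF F + N * T₁) : ℕ) * Real.logb 2 M)
          = a / N + b := by
        rw [hadef, hbdef]
        push_cast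
        field_simp
      linarith
    calc Filter.limsup _ atTop ≤ Filter.limsup (fun N : ℕ => ((a / N + b : ℝ) : EReal)) atTop :=
        Filter.limsup_le_limsup hfg
      _ = (b : EReal) := hg.limsup_eq
  have hsup : (⨆ F : Finset V, Filter.limsup (fun N : ℕ =>
      (((1 : ℝ) / N * Real.logb 2
        ((restrictSet X (⋃ n ∈ Finset.range (N + 1), τ^[n] '' (F : Set V))).ncard)
          : ℝ) : EReal)) Filter.atTop) ≤ (b : EReal) := iSup_le hbnd
  rw [hEnt] at hsup
  exact EReal.coe_ne_top b (top_le_iff.mp hsup)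
end

section
/- Let (A^V, X, Φ) be a symbolic dynamical system with Φ : X → X equicontinuous and surjective. Then (X, Φ) is an odometer bundle: for every x ∈ X, the orbit closure system (cl{Φᵗ(x) : t ∈ ℕ}, Φ) is an inverse limit of finite cyclic permutation systems. Equivalently, (X,Φ) is an inverse limit of finite permutation dynamical systems. -/
/-!
Cover `V` by finite windows `W₀ ⊆ W₁ ⊆ ⋯` and record of each `x ∈ X` its trajectory
seen through `Wₙ`, `t ↦ (Φᵗ x)|Wₙ`. Equicontinuity makes this a locally constant
function of `x`, so on the compact set `X` it takes finitely many values `Yₙ`; the time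
shift acts on `Yₙ`, surjectively because `Φ` is onto, hence bijectively. Trajectories
through all windows determine `x`, and by compactness every compatible sequence of them
is realized, so `X` is the inverse limit of the permutation systems `Yₙ`.
-/

open Function Set

theorem IsLocallyConstant.of_factorsThrough {X Y Z : Type*} [TopologicalSpace X] {f : X → Y}
    {g : X → Z} (hg : IsLocallyConstant g) (hfg : f.FactorsThrough g) : IsLocallyConstant f :=
  (IsLocallyConstant.iff_eventually_eq f).2 fun x => (hg.eventually_eq x).mono fun _ hy => hfg hy

theorem Countable.exists_monotone_finset_exhaustion (V : Type*) [Countable V] :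
    ∃ W : ℕ → Finset V, Monotone W ∧ ∀ v, ∃ n, v ∈ W n := by
  obtain ⟨f, hf⟩ := Countable.exists_injective_nat V
  refine ⟨fun n => (Finset.range n).preimage f hf.injOn, fun m n hmn v => ?_,
    fun v => ⟨f v + 1, ?_⟩⟩ <;> simp only [Finset.mem_preimage, Finset.mem_range] <;> omega

def IsInverseLimitOfFinitePerms (X : Type*) [TopologicalSpace X] (T : X → X) : Prop :=
  ∃ (Y : ℕ → Type) (_ : ∀ n, Finite (Y n)) (σ : ∀ n, Y n ≃ Y n)
    (π : ∀ n, Y (n + 1) → Y n),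
    (∀ n, Surjective (π n)) ∧
    (∀ n y, π n (σ (n + 1) y) = σ n (π n y)) ∧
    ∃ e : X ≃ {y : ∀ n, Y n // ∀ n, π n (y (n + 1)) = y n},
      (∀ n, IsLocallyConstant fun x => (e x).1 n) ∧
      ∀ x n, (e (T x)).1 n = σ n ((e x).1 n)

section InverseLimit

variable {X : Type*} [TopologicalSpace X] [CompactSpace X]

theorem exists_forall_eq_of_compatible {β : ℕ → Type*} {q : ∀ n, X → β n}
    {p : ∀ n, β (n + 1) → β n} (hq : ∀ n, IsLocallyConstant (q n))
    (hqs : ∀ n, Surjective (q n)) (hpq : ∀ n x, p n (q (n + 1) x) = q n x)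
    {y : ∀ n, β n} (hy : ∀ n, p n (y (n + 1)) = y n) : ∃ x, ∀ n, q n x = y n := by
  let C n := {x | q n x = y n}
  have hC n : IsClosed (C n) := (hq n).isClosed_fiber (y n)
  have hanti n : C (n + 1) ⊆ C n := fun x (hx : q (n + 1) x = y (n + 1)) =>
    show q n x = y n by rw [← hpq, hx, hy]
  obtain ⟨x, hx⟩ := IsCompact.nonempty_iInter_of_sequence_nonempty_isCompact_isClosed C hanti
    (fun n => hqs n (y n)) (hC 0).isCompact hC
  exact ⟨x, mem_iInter.1 hx⟩

theorem isInverseLimitOfFinitePerms_of_surjective {T : X → X} (hT : Surjective T)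
    {β : ℕ → Type} {q : ∀ n, X → β n} (hq : ∀ n, IsLocallyConstant (q n))
    (hqs : ∀ n, Surjective (q n)) {p : ∀ n, β (n + 1) → β n}
    (hpq : ∀ n x, p n (q (n + 1) x) = q n x) {s : ∀ n, β n → β n}
    (hsq : ∀ n x, s n (q n x) = q n (T x)) (hsep : Injective fun x n => q n x) :
    IsInverseLimitOfFinitePerms X T := by
  have hfin n : Finite (β n) :=
    finite_univ_iff.1 ((hqs n).range_eq ▸ (hq n).range_finite)
  have hs n : Bijective (s n) := by
    refine Finite.surjective_iff_bijective.1 fun b => ?_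
    obtain ⟨x, rfl⟩ := hqs n b
    obtain ⟨x', rfl⟩ := hT x
    exact ⟨q n x', hsq n x'⟩
  let e (x : X) : {y : ∀ n, β n // ∀ n, p n (y (n + 1)) = y n} :=
    ⟨fun n => q n x, fun n => hpq n x⟩
  have he : Bijective e := ⟨fun _ _ h => hsep (congrArg Subtype.val h), fun ⟨_, hy⟩ =>
    (exists_forall_eq_of_compatible hq hqs hpq hy).imp fun _ hx => Subtype.ext (funext hx)⟩
  refine ⟨β, hfin, fun n => Equiv.ofBijective _ (hs n), p, fun n b => ?_, fun n b => ?_,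
    Equiv.ofBijective e he, hq, fun x n => (hsq n x).symm⟩
  · obtain ⟨x, rfl⟩ := hqs n b
    exact ⟨q (n + 1) x, hpq n x⟩
  · obtain ⟨x, rfl⟩ := hqs (n + 1) b
    simp only [Equiv.ofBijective_apply, hsq, hpq]

theorem isInverseLimitOfFinitePerms_of_isLocallyConstant {T : X → X} (hT : Surjective T)
    {β : ℕ → Type*} {q : ∀ n, X → β n} (hq : ∀ n, IsLocallyConstant (q n))
    {p : ∀ n, β (n + 1) → β n} (hpq : ∀ n x, p n (q (n + 1) x) = q n x)
    {s : ∀ n, β n → β n} (hsq : ∀ n x, s n (q n x) = q n (T x))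
    (hsep : Injective fun x n => q n x) :
    IsInverseLimitOfFinitePerms X T := by
  have (n : ℕ) : Finite (range (q n)) := (hq n).range_finite.to_subtype
  let E n : range (q n) ≃ Shrink.{0} (range (q n)) := equivShrink _
  have hp n : MapsTo (p n) (range (q (n + 1))) (range (q n)) := by
    rintro _ ⟨x, rfl⟩
    exact ⟨x, (hpq n x).symm⟩
  have hs n : MapsTo (s n) (range (q n)) (range (q n)) := by
    rintro _ ⟨x, rfl⟩
    exact ⟨T x, (hsq n x).symm⟩
  have hq' n : IsLocallyConstant (rangeFactorization (q n)) :=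
    IsLocallyConstant.desc _ Subtype.val (hq n) Subtype.val_injective
  refine isInverseLimitOfFinitePerms_of_surjective hT
    (q := fun n => E n ∘ rangeFactorization (q n)) (fun n => (hq' n).comp (E n))
    (fun n => (E n).surjective.comp rangeFactorization_surjective)
    (p := fun n => E n ∘ (hp n).restrict ∘ (E (n + 1)).symm) (fun n x => ?_)
    (s := fun n => E n ∘ (hs n).restrict ∘ (E n).symm) (fun n x => ?_)
    fun x x' h => hsep (funext fun n => congrArg Subtype.val ((E n).injective (congrFun h n)))
  · simp only [comp_apply, Equiv.symm_apply_apply]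
    exact congrArg (E n) (Subtype.ext (hpq n x))
  · simp only [comp_apply, Equiv.symm_apply_apply]
    exact congrArg (E n) (Subtype.ext (hsq n x))

end InverseLimit

def trajectory {V A : Type*} (Φ : (V → A) → V → A) (W : Finset V) (x : V → A) :
    ℕ → W → A :=
  fun t w => Φ^[t] x w

theorem isLocallyConstant_trajectory {V A : Type*} [TopologicalSpace A] [DiscreteTopology A]
    {X : Set (V → A)} {Φ : (V → A) → V → A} {W U : Finset V}
    (hU : ∀ x ∈ X, ∀ y ∈ X, (∀ u ∈ U, x u = y u) → ∀ t, ∀ w ∈ W, Φ^[t] x w = Φ^[t] y w) :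
    IsLocallyConstant fun x : X => trajectory Φ W x := by
  have hres : IsLocallyConstant fun (x : X) (u : U) => x.1 u :=
    (IsLocallyConstant.iff_continuous _).2
      (continuous_pi fun u => (continuous_apply u.1).comp continuous_subtype_val)
  exact hres.of_factorsThrough fun x y hxy =>
    funext₂ fun t w => hU x x.2 y y.2 (fun u hu => congrFun hxy ⟨u, hu⟩) t w w.2

theorem equicontinuous_surjective_is_odometer_bundle_general {V A : Type*} [Countable V]
    [Fintype A] [TopologicalSpace A] [DiscreteTopology A]
    (X : Set (V → A)) (hX : Perfect X)
    (Φ : (V → A) → (V → A)) (hm : Set.MapsTo Φ X X)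
    (hsurj : Set.SurjOn Φ X X)
    (hequi : ∀ W : Finset V, ∃ U : Finset V, (W : Set V) ⊆ (U : Set V) ∧
      ∀ x ∈ X, ∀ y ∈ X, (∀ u ∈ U, x u = y u) →
        ∀ (t : ℕ), ∀ w ∈ W, Φ^[t] x w = Φ^[t] y w) :
    ∃ (Y : ℕ → Type) (_ : ∀ n, Finite (Y n)) (σ : ∀ n, Y n ≃ Y n)
      (π : ∀ n, Y (n + 1) → Y n),
      (∀ n, Function.Surjective (π n)) ∧
      (∀ n y, π n (σ (n + 1) y) = σ n (π n y)) ∧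
      ∃ e : {x // x ∈ X} ≃ {y : ∀ n, Y n // ∀ n, π n (y (n + 1)) = y n},
        (∀ n, IsLocallyConstant fun x : {x // x ∈ X} => (e x).1 n) ∧
        ∀ (x : {x // x ∈ X}) (n : ℕ), (e ⟨Φ x.1, hm x.2⟩).1 n = σ n ((e x).1 n) := by
  obtain ⟨W, hWmono, hWcover⟩ := Countable.exists_monotone_finset_exhaustion V
  choose U hU using hequi
  have : CompactSpace X := isCompact_iff_compactSpace.1 hX.closed.isCompact
  refine isInverseLimitOfFinitePerms_of_isLocallyConstant (hm.restrict_surjective_iff.2 hsurj)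
    (q := fun n x => trajectory Φ (W n) x) (fun n => isLocallyConstant_trajectory (hU (W n)).2)
    (p := fun n y t w => y t ⟨w, hWmono n.le_succ w.2⟩) (fun n x => rfl)
    (s := fun n y t => y (t + 1)) (fun n x => rfl)
    fun x y hxy => Subtype.ext (funext fun v => ?_)
  obtain ⟨n, hn⟩ := hWcover v
  exact congrFun (congrFun (congrFun hxy n) 0) ⟨v, hn⟩

/-- An equicontinuous surjective symbolic dynamical system is an odometer bundle: it is
topologically conjugate to the inverse limit of a sequence of finite permutation
dynamical systems (conjugacy given by a bijection whose coordinates are locally constant,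
which is equivariant for the dynamics). -/
theorem equicontinuous_surjective_is_odometer_bundle {V A : Type*} [Countable V]
    [Fintype A] [TopologicalSpace A] [DiscreteTopology A]
    (X : Set (V → A)) (hX : Perfect X)
    (Φ : (V → A) → (V → A)) (hΦ : Continuous Φ) (hm : Set.MapsTo Φ X X)
    (hsurj : Set.SurjOn Φ X X)
    (hequi : ∀ W : Finset V, ∃ U : Finset V, (W : Set V) ⊆ (U : Set V) ∧
      ∀ x ∈ X, ∀ y ∈ X, (∀ u ∈ U, x u = y u) →
        ∀ (t : ℕ), ∀ w ∈ W, Φ^[t] x w = Φ^[t] y w) :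
    ∃ (Y : ℕ → Type) (_ : ∀ n, Finite (Y n)) (σ : ∀ n, Y n ≃ Y n)
      (π : ∀ n, Y (n + 1) → Y n),
      (∀ n, Function.Surjective (π n)) ∧
      (∀ n y, π n (σ (n + 1) y) = σ n (π n y)) ∧
      ∃ e : {x // x ∈ X} ≃ {y : ∀ n, Y n // ∀ n, π n (y (n + 1)) = y n},
        (∀ n, IsLocallyConstant fun x : {x // x ∈ X} => (e x).1 n) ∧
        ∀ (x : {x // x ∈ X}) (n : ℕ), (e ⟨Φ x.1, hm x.2⟩).1 n = σ n ((e x).1 n) :=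
  equicontinuous_surjective_is_odometer_bundle_general X hX Φ hm hsurj hequi
end

section
/- Consider the symbolic dynamical system on V = V_□ ⊔ V_○ with alphabet A = ℤ/2 × ℤ/2 defined as follows. Index V by ℕ; let M = {m_k : k ≥ 0} with m_k = k(k+1) (so m_0=0, m_1=2, m_2=6, …), V_□ = {□_{m_k}} and V_○ the remaining vertices ○_n. Let X = {a ∈ A^V : the second coordinate b_n = 0 for all circle vertices}. The dynamics: each circle vertex ○_n copies the first coordinate of vertex n+1 and sets its second coordinate to 0; each square vertex □_{m_k} updates to (a_{m_k+1}, a_{m_{k+1}} + b_{m_{k+1}}). Then the system (X, Φ) is positively expansive with posexpansive window the single vertex □_0: the map x ↦ (Φᵗ(x)_{□_0})_{t∈ℕ} is injective on X. -/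
open Filter Topology

/-- For `n = k(k+1)`, recovers `k`; used to recognize the `square' vertices `m_k = k(k+1)`. -/
def kOf (n : ℕ) : ℕ := (Nat.sqrt (4 * n + 1) - 1) / 2

/-- `n` is a square vertex, i.e. `n = m_k = k(k+1)` for some `k`. -/
def isSq (n : ℕ) : Prop := kOf n * (kOf n + 1) = n

/-- The pattern space: the second coordinate vanishes at every circle vertex. -/
def exX : Set (ℕ → ZMod 2 × ZMod 2) :=
  {a | ∀ n : ℕ, ¬ isSq n → (a n).2 = 0}

/-- The dynamics: each circle vertex `○_n` copies the first coordinate of vertex `n+1`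
(and keeps second coordinate `0`); each square vertex `□_{m_k}` updates to
`(a_{m_k+1}, a_{m_{k+1}} + b_{m_{k+1}})`. -/
def exPhi (a : ℕ → ZMod 2 × ZMod 2) : ℕ → ZMod 2 × ZMod 2 := fun n =>
  if kOf n * (kOf n + 1) = n then
    ((a (n + 1)).1,
      (a ((kOf n + 1) * (kOf n + 2))).1 + (a ((kOf n + 1) * (kOf n + 2))).2)
  else ((a (n + 1)).1, 0)

lemma kOf_sq (j : ℕ) : kOf (j * (j + 1)) = j := by
  unfold kOf
  have h : 4 * (j * (j + 1)) + 1 = (2 * j + 1) ^ 2 := by ring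
  rw [h, Nat.sqrt_eq']
  omega

lemma fst_iter (x : ℕ → ZMod 2 × ZMod 2) (t n : ℕ) :
    (exPhi^[t] x n).1 = (x (n + t)).1 := by
  induction t generalizing x n with
  | zero => simp
  | succ t ih =>
    rw [Function.iterate_succ_apply, ih]
    unfold exPhi
    split <;> simp [Nat.add_assoc]

lemma snd_eq (x y : ℕ → ZMod 2 × ZMod 2)
    (h : ∀ t : ℕ, exPhi^[t] x 0 = exPhi^[t] y 0) :
    ∀ j t : ℕ, (exPhi^[t] x (j * (j + 1))).2 = (exPhi^[t] y (j * (j + 1))).2 := by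
  intro j
  induction j with
  | zero => intro t; simpa using congrArg Prod.snd (h t)
  | succ j ih =>
    intro t
    have h1 := ih (t + 1)
    rw [Function.iterate_succ_apply', Function.iterate_succ_apply'] at h1
    simp only [exPhi, kOf_sq, if_true] at h1
    have hf : (exPhi^[t] x ((j + 1) * (j + 2))).1
        = (exPhi^[t] y ((j + 1) * (j + 2))).1 := by
      rw [fst_iter, fst_iter]
      have h2 := congrArg Prod.fst (h ((j + 1) * (j + 2) + t))
      rw [fst_iter, fst_iter] at h2
      simpa using h2
    have he : (j + 1) * (j + 1 + 1) = (j + 1) * (j + 2) := rfl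
    rw [he]
    linear_combination h1 - hf

/-- The system `(exX, exPhi)` is positively expansive with posexpansive window the single
vertex `□_0 = 0`: the full forward trace at vertex `0` determines the point. -/
theorem example_posexpansive :
    ∀ x ∈ exX, ∀ y ∈ exX, (∀ t : ℕ, exPhi^[t] x 0 = exPhi^[t] y 0) → x = y := by
  intro x hx y hy h
  funext n
  have hfst : (x n).1 = (y n).1 := by
    have h2 := congrArg Prod.fst (h n)
    rw [fst_iter, fst_iter] at h2
    simpa using h2
  have hsnd : (x n).2 = (y n).2 := by
    by_cases hs : isSq n
    · have h3 := snd_eq x y h (kOf n) 0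
      simp only [Function.iterate_zero, id] at h3
      rwa [hs] at h3
    · rw [hx n hs, hy n hs]
  exact Prod.ext hfst hsnd
end

section
/- Let (X,d) and (X',d') be compact metric spaces and Γ : X → X' a continuous surjection which is (d,d')-Hölder: there exist η, λ > 0 with d'(Γ(x₁),Γ(x₂)) ≤ λ·d(x₁,x₂)^η for all x₁,x₂. Define the double-logarithmic dimension dim(X,d) := lim_{ε→0} log(log N_ε(X)) / log(−log ε) (when the limit exists), where N_ε(X) is the minimal cardinality of a cover of X by open sets of diameter ≤ ε. If both dimensions exist, then dim(X,d) ≥ dim(X',d'). -/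
open Filter Topology

/-- The minimal cardinality of a cover of `X` by open sets of diameter at most `ε`. -/
noncomputable def coverNum (X : Type*) [MetricSpace X] (ε : ℝ) : ℕ :=
  sInf {n : ℕ | ∃ C : Finset (Set X), C.card = n ∧
    (∀ S ∈ C, IsOpen S ∧ Metric.diam S ≤ ε) ∧ ⋃₀ (C : Set (Set X)) = Set.univ}

lemma coverSet_nonempty (X : Type*) [MetricSpace X] [CompactSpace X] {ε : ℝ} (hε : 0 < ε) :
    {n : ℕ | ∃ C : Finset (Set X), C.card = n ∧
      (∀ S ∈ C, IsOpen S ∧ Metric.diam S ≤ ε) ∧ ⋃₀ (C : Set (Set X)) = Set.univ}.Nonempty := by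
  classical
  obtain ⟨t, ht⟩ := isCompact_univ.elim_finite_subcover
    (fun x : X => Metric.ball x (ε/3)) (fun x => Metric.isOpen_ball)
    (fun x _ => Set.mem_iUnion.2 ⟨x, Metric.mem_ball_self (by linarith)⟩)
  refine ⟨(t.image (fun x => Metric.ball x (ε/3))).card, _, rfl, ?_, ?_⟩
  · intro S hS
    simp only [Finset.mem_image] at hS
    obtain ⟨x, -, rfl⟩ := hS
    exact ⟨Metric.isOpen_ball, (Metric.diam_ball (by linarith)).trans (by linarith)⟩
  · apply Set.eq_univ_of_univ_subset
    intro y hy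
    obtain ⟨x, hx, hyx⟩ := Set.mem_iUnion₂.1 (ht hy)
    exact ⟨Metric.ball x (ε/3), by simp [Finset.mem_image]; exact ⟨x, hx, rfl⟩, hyx⟩

lemma coverNum_key {X X' : Type*} [MetricSpace X] [MetricSpace X']
    [CompactSpace X] [CompactSpace X']
    (Γ : X → X') (hs : Function.Surjective Γ)
    (η lam : ℝ) (hη : 0 < η) (hlam : 0 < lam)
    (hH : ∀ x₁ x₂ : X, dist (Γ x₁) (Γ x₂) ≤ lam * dist x₁ x₂ ^ η)
    {ε : ℝ} (hε : 0 < ε) :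
    coverNum X' (2 * lam * ε ^ η) ≤ coverNum X ε := by
  classical
  have hmem := Nat.sInf_mem (coverSet_nonempty X hε)
  obtain ⟨C, hcard, hprop, hcov⟩ := hmem
  set r : ℝ := lam * ε ^ η / 2 with hr
  have hrpos : 0 < r := by positivity
  set f : Set X → Set X' := fun S => Metric.thickening r (Γ '' S) with hf
  have hdiam : ∀ S ∈ C, Metric.diam (f S) ≤ 2 * lam * ε ^ η := by
    intro S hS
    have hdS : Metric.diam (Γ '' S) ≤ lam * ε ^ η := by
      apply Metric.diam_le_of_forall_dist_le (by positivity)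
      rintro y₁ ⟨x₁, hx₁, rfl⟩ y₂ ⟨x₂, hx₂, rfl⟩
      calc dist (Γ x₁) (Γ x₂) ≤ lam * dist x₁ x₂ ^ η := hH x₁ x₂
        _ ≤ lam * ε ^ η := by
            apply mul_le_mul_of_nonneg_left _ hlam.le
            apply Real.rpow_le_rpow dist_nonneg _ hη.le
            exact (Metric.dist_le_diam_of_mem Metric.isBounded_of_compactSpace hx₁ hx₂).trans
              ((hprop S hS).2)
    calc Metric.diam (f S) ≤ Metric.diam (Γ '' S) + 2 * r :=
          Metric.diam_thickening_le _ hrpos.le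
      _ ≤ lam * ε ^ η + 2 * (lam * ε ^ η / 2) := by linarith
      _ = 2 * lam * ε ^ η := by ring
  have hcov' : ⋃₀ ((C.image f : Finset (Set X')) : Set (Set X')) = Set.univ := by
    apply Set.eq_univ_of_univ_subset
    intro y' _
    obtain ⟨x, rfl⟩ := hs y'
    have hx : x ∈ ⋃₀ (C : Set (Set X)) := hcov ▸ Set.mem_univ x
    obtain ⟨S, hS, hxS⟩ := hx
    exact ⟨f S, by simpa [Finset.coe_image] using Set.mem_image_of_mem f hS,
      Metric.self_subset_thickening hrpos _ (Set.mem_image_of_mem Γ hxS)⟩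
  have h1 : coverNum X' (2 * lam * ε ^ η) ≤ (C.image f).card := by
    apply Nat.sInf_le
    refine ⟨C.image f, rfl, ?_, hcov'⟩
    intro T hT
    simp only [Finset.mem_image] at hT
    obtain ⟨S, hS, rfl⟩ := hT
    exact ⟨Metric.isOpen_thickening, hdiam S hS⟩
  refine h1.trans (Finset.card_image_le.trans ?_)
  rw [hcard]; rfl

lemma ratio_aux (η c : ℝ) (hη : 0 < η) :
    Tendsto (fun t : ℝ => Real.log t / Real.log (η * t - c)) atTop (𝓝 1) := by
  have hu : Tendsto (fun t : ℝ => Real.log (η - c / t)) atTop (𝓝 (Real.log η)) := by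
    have h1 : Tendsto (fun t : ℝ => η - c / t) atTop (𝓝 η) := by
      simpa using tendsto_const_nhds.sub (tendsto_const_nhds.div_atTop tendsto_id (a := c))
    exact ((Real.continuousAt_log hη.ne').tendsto).comp h1
  have h0 : Tendsto (fun t : ℝ => Real.log (η - c / t) / Real.log t) atTop (𝓝 0) :=
    hu.div_atTop Real.tendsto_log_atTop
  have h2 : Tendsto (fun t : ℝ => (1 + Real.log (η - c / t) / Real.log t)⁻¹) atTop (𝓝 1) := by
    have := (tendsto_const_nhds.add h0).inv₀ (by norm_num : (1 : ℝ) + 0 ≠ 0)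
    simpa using this
  refine h2.congr' ?_
  filter_upwards [eventually_gt_atTop (max 1 (2 * |c| / η))] with t ht
  have ht1 : 1 < t := (le_max_left _ _).trans_lt ht
  have ht0 : 0 < t := by linarith
  have hct : |c| / t < η / 2 := by
    rw [div_lt_iff₀ ht0]
    have h2c : 2 * |c| / η < t := (le_max_right _ _).trans_lt ht
    rw [div_lt_iff₀ hη] at h2c
    nlinarith
  have hpos : 0 < η - c / t := by
    have : c / t ≤ |c| / t := by gcongr; exact le_abs_self c
    linarith
  have hL : 0 < Real.log t := Real.log_pos ht1
  have hsplit : Real.log (η * t - c) = Real.log t + Real.log (η - c / t) := by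
    have : η * t - c = t * (η - c / t) := by field_simp
    rw [this, Real.log_mul ht0.ne' hpos.ne']
  have heq : 1 + Real.log (η - c / t) / Real.log t
      = (Real.log t + Real.log (η - c / t)) / Real.log t := by
    field_simp
  rw [hsplit, heq, inv_div]


/-- If `Γ : X → X'` is a Hölder continuous surjection of compact metric spaces and both
double-logarithmic dimensions `dim(X,d) = lim_{ε→0} log(log N_ε)/log(-log ε)` exist,
then `dim(X,d) ≥ dim(X',d')`. -/
theorem dim_ge_of_holder_surjection {X X' : Type*} [MetricSpace X] [MetricSpace X']
    [CompactSpace X] [CompactSpace X']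
    (Γ : X → X') (hc : Continuous Γ) (hs : Function.Surjective Γ)
    (η lam : ℝ) (hη : 0 < η) (hlam : 0 < lam)
    (hH : ∀ x₁ x₂ : X, dist (Γ x₁) (Γ x₂) ≤ lam * dist x₁ x₂ ^ η)
    (D D' : ℝ)
    (hD : Filter.Tendsto
      (fun ε : ℝ => Real.log (Real.log (coverNum X ε)) / Real.log (-Real.log ε))
      (nhdsWithin 0 (Set.Ioi 0)) (nhds D))
    (hD' : Filter.Tendsto
      (fun ε : ℝ => Real.log (Real.log (coverNum X' ε)) / Real.log (-Real.log ε))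
      (nhdsWithin 0 (Set.Ioi 0)) (nhds D')) :
    D' ≤ D := by
  have htend : Tendsto (fun ε : ℝ => -Real.log ε) (𝓝[>] (0:ℝ)) atTop :=
    tendsto_neg_atBot_atTop.comp Real.tendsto_log_nhdsGT_zero
  have htendB : Tendsto (fun ε : ℝ => Real.log (-Real.log ε)) (𝓝[>] (0:ℝ)) atTop :=
    Real.tendsto_log_atTop.comp htend
  by_cases hD'0 : D' ≤ 0
  · -- show 0 ≤ D
    have hlhs : Tendsto (fun ε : ℝ => Real.log (Real.log 2) / Real.log (-Real.log ε))
        (𝓝[>] (0:ℝ)) (𝓝 0) := tendsto_const_nhds.div_atTop htendB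
    have key : ∀ᶠ ε in 𝓝[>] (0:ℝ),
        Real.log (Real.log 2) / Real.log (-Real.log ε)
          ≤ Real.log (Real.log (coverNum X ε)) / Real.log (-Real.log ε) := by
      filter_upwards [htendB.eventually (eventually_gt_atTop 0)] with ε hB
      set N := coverNum X ε with hN
      rcases le_or_gt N 1 with h1 | h1
      · have hlogN : Real.log N = 0 := by
          interval_cases N <;> simp
        have : Real.log (Real.log 2) < 0 := by
          apply Real.log_neg (Real.log_pos one_lt_two)
          have h2e : (2:ℝ) < Real.exp 1 := by
            have := Real.exp_one_gt_d9; linarith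
          calc Real.log 2 < Real.log (Real.exp 1) :=
                Real.log_lt_log (by norm_num) h2e
            _ = 1 := Real.log_exp 1
        rw [hlogN]
        simp only [Real.log_zero, zero_div]
        exact le_of_lt (div_neg_of_neg_of_pos this hB)
      · have h2N : (2:ℝ) ≤ N := by exact_mod_cast h1
        have : Real.log (Real.log 2) ≤ Real.log (Real.log N) :=
          Real.log_le_log (Real.log_pos one_lt_two)
            (Real.log_le_log (by norm_num) h2N)
        gcongr
    have h0D : (0:ℝ) ≤ D := le_of_tendsto_of_tendsto hlhs hD key
    linarith
  · push_neg at hD'0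
    set g : ℝ → ℝ := fun ε => 2 * lam * ε ^ η with hg_def
    have hg : Tendsto g (𝓝[>] (0:ℝ)) (𝓝[>] (0:ℝ)) := by
      rw [tendsto_nhdsWithin_iff]
      constructor
      · have h1 : ContinuousAt (fun ε : ℝ => 2 * lam * ε ^ η) 0 :=
          continuousAt_const.mul (Real.continuousAt_rpow_const 0 η (Or.inr hη.le))
        have h2 := h1.tendsto.mono_left (nhdsWithin_le_nhds (s := Set.Ioi (0:ℝ)))
        simpa [Real.zero_rpow hη.ne'] using h2
      · filter_upwards [self_mem_nhdsWithin] with ε (hε : 0 < ε)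
        exact mul_pos (by positivity) (Real.rpow_pos_of_pos hε η)
    have hB' : Tendsto (fun ε : ℝ => Real.log (-Real.log (g ε))) (𝓝[>] (0:ℝ)) atTop :=
      htendB.comp hg
    -- the ratio tends to 1
    have hr : Tendsto (fun ε : ℝ => Real.log (-Real.log ε) / Real.log (-Real.log (g ε)))
        (𝓝[>] (0:ℝ)) (𝓝 1) := by
      have := (ratio_aux η (Real.log (2 * lam)) hη).comp htend
      refine this.congr' ?_
      filter_upwards [self_mem_nhdsWithin] with ε (hε : 0 < ε)
      have hlog : Real.log (g ε) = Real.log (2 * lam) + η * Real.log ε := by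
        rw [hg_def]
        rw [Real.log_mul (by positivity) (Real.rpow_pos_of_pos hε η).ne',
          Real.log_rpow hε]
      simp only [Function.comp]
      rw [hlog]
      ring_nf
    -- eventually the numerator for X' is positive
    have hE : ∀ᶠ ε' in 𝓝[>] (0:ℝ), 0 < Real.log (Real.log (coverNum X' ε')) := by
      filter_upwards [hD'.eventually (eventually_gt_nhds (by linarith : D' / 2 < D')),
        htendB.eventually (eventually_gt_atTop 0)] with ε' hf' hB
      have hfpos : 0 < Real.log (Real.log (coverNum X' ε')) / Real.log (-Real.log ε') := by
        exact (half_pos hD'0).trans hf'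
      have := mul_pos hfpos hB
      rwa [div_mul_cancel₀ _ hB.ne'] at this
    have hineq : ∀ᶠ ε in 𝓝[>] (0:ℝ),
        Real.log (Real.log (coverNum X' (g ε))) / Real.log (-Real.log (g ε))
          ≤ (Real.log (Real.log (coverNum X ε)) / Real.log (-Real.log ε)) *
            (Real.log (-Real.log ε) / Real.log (-Real.log (g ε))) := by
      filter_upwards [self_mem_nhdsWithin, hg.eventually hE,
        hB'.eventually (eventually_gt_atTop 0),
        htendB.eventually (eventually_gt_atTop 0)] with ε hε hA' hBg hB
      replace hε : (0:ℝ) < ε := hε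
      set N' := coverNum X' (g ε) with hN'
      set N := coverNum X ε with hN
      have hNN : N' ≤ N := coverNum_key Γ hs η lam hη hlam hH hε
      have hlogN'_nonneg : 0 ≤ Real.log N' := Real.log_natCast_nonneg N'
      have hlogN' : 0 < Real.log N' := by
        rcases hlogN'_nonneg.lt_or_eq with h | h
        · exact h
        · rw [← h, Real.log_zero] at hA'; exact absurd hA' (lt_irrefl 0)
      have hN'pos : (0:ℝ) < N' := by
        by_contra h
        push_neg at h
        have : (N' : ℝ) = 0 := le_antisymm h (by positivity)
        rw [this, Real.log_zero] at hlogN'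
        exact absurd hlogN' (lt_irrefl 0)
      have hAA : Real.log (Real.log N') ≤ Real.log (Real.log N) :=
        Real.log_le_log hlogN' (Real.log_le_log hN'pos (by exact_mod_cast hNN))
      have step1 : Real.log (Real.log N') / Real.log (-Real.log (g ε))
          ≤ Real.log (Real.log N) / Real.log (-Real.log (g ε)) := by gcongr
      refine step1.trans (le_of_eq ?_)
      rw [div_mul_div_comm,
        mul_comm (Real.log (-Real.log ε)) (Real.log (-Real.log (g ε))),
        mul_div_mul_right _ _ hB.ne']
    have hcomp : Tendsto (fun ε : ℝ =>
        Real.log (Real.log (coverNum X' (g ε))) / Real.log (-Real.log (g ε)))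
        (𝓝[>] (0:ℝ)) (𝓝 D') := hD'.comp hg
    have hrhs : Tendsto (fun ε : ℝ =>
        (Real.log (Real.log (coverNum X ε)) / Real.log (-Real.log ε)) *
          (Real.log (-Real.log ε) / Real.log (-Real.log (g ε))))
        (𝓝[>] (0:ℝ)) (𝓝 (D * 1)) := hD.mul hr
    have := le_of_tendsto_of_tendsto hcomp hrhs hineq
    linarith
end
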